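/- arXiv:1606.08794 — 2 statements merged into one kernel-verified Lean document; each statement's English description precedes it below -/
import Mathlib

section
/- In a nilpotent differential graded Lie algebra L over ℚ, the gauge action of L_0 on Maurer-Cartan elements is well-defined: for x ∈ L_0 and z ∈ MC(L), the element x ∙ z = e^{ad_x}(z) - ((e^{ad_x} - 1)/ad_x)(dx) is again a Maurer-Cartan element. -/
/-!
Write `a(t) = e^{t ad_x} z - ((e^{t ad_x} - 1)/ad_x)(t dx)`, a polynomial in `t` whose
coefficients are `gaugeCoeff`. It solves `a' = [x, a] - dx` with `a(0) = z`, and then the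
curvature `F = da + ½[a, a]` solves `F' = [x, F]` (Leibniz rule for `d` and Jacobi identity for
`ad_x`, both with `x` of degree `0`) with `F(0) = 0`. Hence every coefficient of `F` vanishes,
and evaluating at `t = 1` shows that `x ∙ z = a(1)` is Maurer-Cartan.
-/

namespace Paper

variable {L : Type*} [AddCommGroup L] [Module ℚ L]

/-- The axioms of a ℤ-graded differential graded Lie algebra over ℚ, on a ℚ-vector space `L`
with grading `deg`, bilinear bracket `bk` and differential `d` of degree `-1`:
graded antisymmetry, graded Jacobi identity, graded Leibniz rule and `d ∘ d = 0`. -/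
structure IsDGLA (deg : ℤ → Submodule ℚ L) (bk : L →ₗ[ℚ] L →ₗ[ℚ] L) (d : L →ₗ[ℚ] L) : Prop where
  bk_deg : ∀ (i j : ℤ) (x y : L), x ∈ deg i → y ∈ deg j → bk x y ∈ deg (i + j)
  antisymm : ∀ (i j : ℤ) (x y : L), x ∈ deg i → y ∈ deg j →
    bk x y = -(((-1 : ℚ) ^ (i * j)) • bk y x)
  jacobi : ∀ (i j : ℤ) (x y z : L), x ∈ deg i → y ∈ deg j →
    bk x (bk y z) = bk (bk x y) z + ((-1 : ℚ) ^ (i * j)) • bk y (bk x z)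
  d_deg : ∀ (i : ℤ) (x : L), x ∈ deg i → d x ∈ deg (i - 1)
  leibniz : ∀ (i : ℤ) (x y : L), x ∈ deg i →
    d (bk x y) = bk (d x) y + ((-1 : ℚ) ^ i) • bk x (d y)
  d_sq : ∀ x : L, d (d x) = 0
  deg_spans : (⨆ i : ℤ, deg i) = ⊤

/-- Iterated adjoint action: `adp bk x n z = ad_x^n (z)`. -/
def adp (bk : L →ₗ[ℚ] L →ₗ[ℚ] L) (x : L) (n : ℕ) (z : L) : L := (fun t => bk x t)^[n] z

/-- A Maurer-Cartan element: `u` of degree `-1` with `d u = -½[u,u]`. -/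
def IsMC (deg : ℤ → Submodule ℚ L) (bk : L →ₗ[ℚ] L →ₗ[ℚ] L) (d : L →ₗ[ℚ] L) (u : L) : Prop :=
  u ∈ deg (-1) ∧ d u = -((1 / 2 : ℚ) • bk u u)

open Finset

section CauchyProduct

variable {R M N P : Type*} [CommSemiring R] [AddCommMonoid M] [AddCommMonoid N] [AddCommMonoid P]
  [Module R M] [Module R N] [Module R P] (B : M →ₗ[R] N →ₗ[R] P)

def cauchyProduct (a : ℕ → M) (b : ℕ → N) (n : ℕ) : P :=
  ∑ p ∈ antidiagonal n, B (a p.1) (b p.2)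

def seqDeriv (a : ℕ → M) (n : ℕ) : M := (n + 1) • a (n + 1)

theorem succ_nsmul_cauchyProduct_succ (a : ℕ → M) (b : ℕ → N) (n : ℕ) :
    (n + 1) • cauchyProduct B a b (n + 1) =
      cauchyProduct B (seqDeriv a) b n + cauchyProduct B a (seqDeriv b) n := by
  calc (n + 1) • cauchyProduct B a b (n + 1)
      = ∑ p ∈ antidiagonal (n + 1), (p.1 • B (a p.1) (b p.2) + p.2 • B (a p.1) (b p.2)) := by
        rw [cauchyProduct, smul_sum]
        refine sum_congr rfl fun p hp => ?_
        rw [← add_smul, mem_antidiagonal.mp hp]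
    _ = _ := by
        rw [sum_add_distrib, Nat.sum_antidiagonal_succ, Nat.sum_antidiagonal_succ']
        simp [cauchyProduct, seqDeriv]

theorem cauchyProduct_single_zero_left (u : M) (b : ℕ → N) (n : ℕ) :
    cauchyProduct B (Pi.single 0 u) b n = B u (b n) := by
  rw [cauchyProduct, sum_eq_single_of_mem (0, n) (by simp)]
  · simp
  · rintro ⟨i, j⟩ hij hne
    obtain rfl : i + j = n := mem_antidiagonal.mp hij
    have hi : i ≠ 0 := by rintro rfl; simp at hne
    simp [hi]

theorem cauchyProduct_single_zero_right (a : ℕ → M) (v : N) (n : ℕ) :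
    cauchyProduct B a (Pi.single 0 v) n = B (a n) v := by
  rw [cauchyProduct, sum_eq_single_of_mem (n, 0) (by simp)]
  · simp
  · rintro ⟨i, j⟩ hij hne
    obtain rfl : i + j = n := mem_antidiagonal.mp hij
    have hj : j ≠ 0 := by rintro rfl; simp at hne
    simp [hj]

theorem sum_range_cauchyProduct {a : ℕ → M} {b : ℕ → N} {m : ℕ}
    (ha : ∀ i ≥ m, a i = 0) (hb : ∀ j ≥ m, b j = 0) :
    ∑ n ∈ range (2 * m), cauchyProduct B a b n = B (∑ i ∈ range m, a i) (∑ j ∈ range m, b j) := by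
  have hrow : ∀ i ∈ range (2 * m),
      B (a i) (∑ j ∈ range (2 * m - i), b j) = B (a i) (∑ j ∈ range m, b j) := by
    intro i _
    rcases lt_or_ge i m with hi | hi
    · rw [eventually_constant_sum hb (by omega)]
    · simp [ha i hi]
  calc ∑ n ∈ range (2 * m), cauchyProduct B a b n
      = ∑ i ∈ range (2 * m), ∑ j ∈ range (2 * m - i), B (a i) (b j) := by
        simp only [cauchyProduct, Nat.sum_antidiagonal_eq_sum_range_succ fun i j => B (a i) (b j)]
        exact sum_range_diag_flip (2 * m) fun i j => B (a i) (b j)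
    _ = ∑ i ∈ range (2 * m), B (a i) (∑ j ∈ range m, b j) := by
        simp only [← map_sum]
        exact sum_congr rfl hrow
    _ = _ := by rw [← LinearMap.sum_apply, ← map_sum, eventually_constant_sum ha (by omega)]

end CauchyProduct

section CauchyProductSub

variable {R M N P : Type*} [CommRing R] [AddCommGroup M] [AddCommGroup N] [AddCommGroup P]
  [Module R M] [Module R N] [Module R P] (B : M →ₗ[R] N →ₗ[R] P)

theorem cauchyProduct_sub_left (a a' : ℕ → M) (b : ℕ → N) (n : ℕ) :
    cauchyProduct B (a - a') b n = cauchyProduct B a b n - cauchyProduct B a' b n := by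
  simp [cauchyProduct]

theorem cauchyProduct_sub_right (a : ℕ → M) (b b' : ℕ → N) (n : ℕ) :
    cauchyProduct B a (b - b') n = cauchyProduct B a b n - cauchyProduct B a b' n := by
  simp [cauchyProduct]

end CauchyProductSub

namespace IsDGLA

variable {deg : ℤ → Submodule ℚ L} {bk : L →ₗ[ℚ] L →ₗ[ℚ] L} {d : L →ₗ[ℚ] L}

theorem bk_comm_of_mem_neg_one (h : IsDGLA deg bk d) {u v : L} (hu : u ∈ deg (-1))
    (hv : v ∈ deg (-1)) : bk u v = bk v u := by
  simpa using h.antisymm (-1) (-1) u v hu hv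

theorem bk_mem_of_mem_zero (h : IsDGLA deg bk d) {x u : L} {j : ℤ} (hx : x ∈ deg 0)
    (hu : u ∈ deg j) : bk x u ∈ deg j := by
  simpa using h.bk_deg 0 j x u hx hu

theorem d_mem_neg_one_of_mem_zero (h : IsDGLA deg bk d) {x : L} (hx : x ∈ deg 0) :
    d x ∈ deg (-1) := by
  simpa using h.d_deg 0 x hx

theorem jacobi_of_mem_zero (h : IsDGLA deg bk d) {x u : L} {j : ℤ} (hx : x ∈ deg 0)
    (hu : u ∈ deg j) (v : L) :
    bk x (bk u v) = bk (bk x u) v + bk u (bk x v) := by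
  simpa using h.jacobi 0 j x u v hx hu

theorem leibniz_of_mem_zero (h : IsDGLA deg bk d) {x : L} (hx : x ∈ deg 0) (y : L) :
    d (bk x y) = bk (d x) y + bk x (d y) := by
  simpa using h.leibniz 0 x y hx

theorem adp_mem_of_mem_zero (h : IsDGLA deg bk d) {x u : L} {j : ℤ} (hx : x ∈ deg 0)
    (hu : u ∈ deg j) (n : ℕ) : adp bk x n u ∈ deg j := by
  induction n with
  | zero => exact hu
  | succ n ih => simpa only [adp, Function.iterate_succ_apply'] using h.bk_mem_of_mem_zero hx ih

theorem bk_cauchyProduct_of_mem_zero (h : IsDGLA deg bk d) {x : L} {a b : ℕ → L} {j : ℤ}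
    (hx : x ∈ deg 0) (ha : ∀ i, a i ∈ deg j) (n : ℕ) :
    bk x (cauchyProduct bk a b n) =
      cauchyProduct bk (fun i => bk x (a i)) b n + cauchyProduct bk a (fun i => bk x (b i)) n := by
  simp only [cauchyProduct, map_sum, h.jacobi_of_mem_zero hx (ha _), sum_add_distrib]

end IsDGLA

theorem adp_eq_zero_of_le {bk : L →ₗ[ℚ] L →ₗ[ℚ] L} {x : L} {N n : ℕ}
    (hnil : ∀ y, adp bk x N y = 0) (hn : N ≤ n) (y : L) : adp bk x n y = 0 := by
  obtain ⟨k, rfl⟩ := Nat.exists_eq_add_of_le hn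
  rw [adp, Function.iterate_add_apply, ← adp, hnil]

/-- The coefficient of `t ^ n` in `e^{t ad_x}(z) - ((e^{t ad_x} - 1)/ad_x)(t dx)`. -/
def gaugeCoeff (bk : L →ₗ[ℚ] L →ₗ[ℚ] L) (d : L →ₗ[ℚ] L) (x z : L) : ℕ → L
  | 0 => z
  | n + 1 => (((n + 1).factorial : ℚ)⁻¹) • (adp bk x (n + 1) z - adp bk x n (d x))

def curvatureCoeff (bk : L →ₗ[ℚ] L →ₗ[ℚ] L) (d : L →ₗ[ℚ] L) (a : ℕ → L) (n : ℕ) : L :=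
  d (a n) + (2 : ℚ)⁻¹ • cauchyProduct bk a a n

section Gauge

variable {deg : ℤ → Submodule ℚ L} {bk : L →ₗ[ℚ] L →ₗ[ℚ] L} {d : L →ₗ[ℚ] L}

theorem seqDeriv_gaugeCoeff (x z : L) :
    seqDeriv (gaugeCoeff bk d x z) =
      (fun n => bk x (gaugeCoeff bk d x z n)) - Pi.single 0 (d x) := by
  funext n
  cases n with
  | zero => simp [seqDeriv, gaugeCoeff, adp]
  | succ n =>
    have hfac : ((n + 1 + 1 : ℕ) : ℚ) * ((n + 1 + 1).factorial : ℚ)⁻¹ =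
        ((n + 1).factorial : ℚ)⁻¹ := by
      rw [Nat.factorial_succ (n + 1)]
      push_cast
      field_simp
    simp only [seqDeriv, gaugeCoeff, Pi.sub_apply, ← Nat.cast_smul_eq_nsmul ℚ, smul_smul, hfac,
      map_smul, map_sub, adp, Function.iterate_succ_apply']
    simp

theorem gaugeCoeff_eq_zero {x z : L} {N n : ℕ} (hnil : ∀ y, adp bk x N y = 0) (hn : N < n) :
    gaugeCoeff bk d x z n = 0 := by
  obtain ⟨n, rfl⟩ := Nat.exists_eq_add_of_lt hn
  simp [gaugeCoeff, adp_eq_zero_of_le hnil (by omega : N ≤ N + n + 1),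
    adp_eq_zero_of_le hnil (by omega : N ≤ N + n)]

theorem sum_range_gaugeCoeff {x z : L} {N : ℕ} (hnil : ∀ y, adp bk x N y = 0) :
    ∑ n ∈ range (N + 1), gaugeCoeff bk d x z n =
      (∑ n ∈ range N, ((n.factorial : ℚ)⁻¹) • adp bk x n z) -
        ∑ n ∈ range N, (((n + 1).factorial : ℚ)⁻¹) • adp bk x n (d x) := by
  rw [← eventually_constant_sum (fun n hn => by rw [adp_eq_zero_of_le hnil hn, smul_zero])
    (Nat.le_succ N), sum_range_succ', sum_range_succ']
  simp only [gaugeCoeff, adp, Function.iterate_succ, Function.comp_apply, smul_sub,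
    sum_sub_distrib, Nat.factorial_zero, Nat.cast_one, inv_one, Function.iterate_zero, id_eq,
    one_smul]
  abel

theorem gaugeCoeff_mem (h : IsDGLA deg bk d) {x z : L} (hx : x ∈ deg 0) (hz : z ∈ deg (-1)) :
    ∀ n, gaugeCoeff bk d x z n ∈ deg (-1)
  | 0 => hz
  | _ + 1 => Submodule.smul_mem _ _ (Submodule.sub_mem _ (h.adp_mem_of_mem_zero hx hz _)
      (h.adp_mem_of_mem_zero hx (h.d_mem_neg_one_of_mem_zero hx) _))

theorem succ_nsmul_d_gaugeCoeff (h : IsDGLA deg bk d) {x : L} (hx : x ∈ deg 0) (z : L) (n : ℕ) :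
    (n + 1) • d (gaugeCoeff bk d x z (n + 1)) =
      bk (d x) (gaugeCoeff bk d x z n) + bk x (d (gaugeCoeff bk d x z n)) := by
  rw [← map_nsmul, ← seqDeriv, seqDeriv_gaugeCoeff, Pi.sub_apply, map_sub,
    h.leibniz_of_mem_zero hx]
  cases n <;> simp [h.d_sq]

theorem succ_nsmul_cauchyProduct_gaugeCoeff (h : IsDGLA deg bk d) {x z : L} (hx : x ∈ deg 0)
    (hz : z ∈ deg (-1)) (n : ℕ) :
    (n + 1) • cauchyProduct bk (gaugeCoeff bk d x z) (gaugeCoeff bk d x z) (n + 1) =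
      bk x (cauchyProduct bk (gaugeCoeff bk d x z) (gaugeCoeff bk d x z) n) -
        2 • bk (d x) (gaugeCoeff bk d x z n) := by
  have ha := gaugeCoeff_mem h hx hz
  rw [succ_nsmul_cauchyProduct_succ, seqDeriv_gaugeCoeff, cauchyProduct_sub_left,
    cauchyProduct_sub_right, cauchyProduct_single_zero_left, cauchyProduct_single_zero_right,
    h.bk_comm_of_mem_neg_one (ha n) (h.d_mem_neg_one_of_mem_zero hx),
    h.bk_cauchyProduct_of_mem_zero hx ha]
  abel

theorem succ_nsmul_curvatureCoeff_gaugeCoeff (h : IsDGLA deg bk d) {x z : L} (hx : x ∈ deg 0)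
    (hz : z ∈ deg (-1)) (n : ℕ) :
    (n + 1) • curvatureCoeff bk d (gaugeCoeff bk d x z) (n + 1) =
      bk x (curvatureCoeff bk d (gaugeCoeff bk d x z) n) := by
  rw [curvatureCoeff, curvatureCoeff, smul_add, smul_comm, succ_nsmul_d_gaugeCoeff h hx,
    succ_nsmul_cauchyProduct_gaugeCoeff h hx hz, map_add, map_smul]
  module

theorem curvatureCoeff_gaugeCoeff_eq_zero (h : IsDGLA deg bk d) {x z : L} (hx : x ∈ deg 0)
    (hz : IsMC deg bk d z) (n : ℕ) : curvatureCoeff bk d (gaugeCoeff bk d x z) n = 0 := by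
  induction n with
  | zero =>
    simp only [curvatureCoeff, cauchyProduct, Nat.antidiagonal_zero, sum_singleton]
    rw [gaugeCoeff, hz.2]
    module
  | succ n ih =>
    have hsmul := succ_nsmul_curvatureCoeff_gaugeCoeff h hx hz.1 n
    rw [ih, map_zero, ← Nat.cast_smul_eq_nsmul ℚ] at hsmul
    exact (smul_eq_zero.mp hsmul).resolve_left (by positivity)

theorem isMC_sum_of_curvatureCoeff_eq_zero {a : ℕ → L} {m : ℕ} (hdeg : ∀ n, a n ∈ deg (-1))
    (hvan : ∀ n ≥ m, a n = 0) (hcurv : ∀ n, curvatureCoeff bk d a n = 0) :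
    IsMC deg bk d (∑ n ∈ range m, a n) := by
  refine ⟨Submodule.sum_mem _ fun n _ => hdeg n, ?_⟩
  calc d (∑ n ∈ range m, a n)
      = ∑ n ∈ range (2 * m), d (a n) := by
        rw [map_sum]
        exact (eventually_constant_sum (fun n hn => by rw [hvan n hn, map_zero]) (by omega)).symm
    _ = ∑ n ∈ range (2 * m), -((2 : ℚ)⁻¹ • cauchyProduct bk a a n) :=
        sum_congr rfl fun n _ => eq_neg_of_add_eq_zero_left (hcurv n)
    _ = -((1 / 2 : ℚ) • bk (∑ n ∈ range m, a n) (∑ n ∈ range m, a n)) := by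
        rw [sum_neg_distrib, ← smul_sum, sum_range_cauchyProduct bk hvan hvan, one_div]

end Gauge

/-- In a nilpotent differential graded Lie algebra `L` over ℚ (here
nilpotency is expressed by `ad_t^N = 0` for every `t`, so that the exponential series
are the finite sums below), the gauge action of `L₀` on Maurer-Cartan elements is
well-defined: for `x ∈ L₀` and `z ∈ MC(L)`, the element
`x ∙ z = e^{ad_x}(z) - ((e^{ad_x} - 1)/ad_x)(dx)`
 `= Σ_{n<N} (1/n!) ad_x^n(z) - Σ_{n<N} (1/(n+1)!) ad_x^n(dx)`
is again a Maurer-Cartan element. -/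
theorem gauge_action_well_defined
    {L : Type*} [AddCommGroup L] [Module ℚ L]
    (deg : ℤ → Submodule ℚ L) (bk : L →ₗ[ℚ] L →ₗ[ℚ] L) (d : L →ₗ[ℚ] L)
    (h : IsDGLA deg bk d)
    (N : ℕ) (hnil : ∀ t y : L, adp bk t N y = 0)
    (x : L) (hx : x ∈ deg 0) (z : L) (hz : IsMC deg bk d z) :
    IsMC deg bk d
      ((∑ n ∈ Finset.range N, ((n.factorial : ℚ)⁻¹) • adp bk x n z) -
        ∑ n ∈ Finset.range N, (((n + 1).factorial : ℚ)⁻¹) • adp bk x n (d x)) := by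
  rw [← sum_range_gaugeCoeff (hnil x)]
  exact isMC_sum_of_curvatureCoeff_eq_zero (gaugeCoeff_mem h hx hz.1)
    (fun n hn => gaugeCoeff_eq_zero (hnil x) hn) (curvatureCoeff_gaugeCoeff_eq_zero h hx hz)

end Paper
end

section
/- Let a be a degree -1 Maurer-Cartan element and define, in the ideal generated by elements v of degree ≥ 0 (with d₁v = -[a,v]) and w (with d₁w = 0), the operators on elements a^r ⊠ v := ad_a^r(v): the linear differential satisfies d₁(a^r ⊠ v) = -a^{r+1} ⊠ v if r is even and 0 if r is odd; consequently the derivation θ = -ad_a - d₁ satisfies θ(a^r ⊠ v) = 0 if r even, -a^{r+1} ⊠ v if r odd, and θ² = 0 on these elements. -/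
/-!
By the Leibniz rule, the Maurer-Cartan equation `d a = -½[a,a]` and the Jacobi identity
`[[a,a],t] = 2[a,[a,t]]` (valid as `a` has odd degree), `d ∘ ad_a + ad_a ∘ d = -ad_a²`.
Hence `θ² = (ad_a + d)² = 0` on all of `L`, and `ad_a` maps the elements with `d t = -[a,t]`
to those with `d t = 0` and vice versa, which gives the alternating pattern along `ad_a^r v`
and `ad_a^r w`.
-/
namespace Paper

variable {L : Type*} [AddCommGroup L] [Module ℚ L]

theorem adp_succ (bk : L →ₗ[ℚ] L →ₗ[ℚ] L) (x : L) (n : ℕ) (z : L) :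
    adp bk x (n + 1) z = bk x (adp bk x n z) :=
  Function.iterate_succ_apply' _ n z

theorem adp_succ' (bk : L →ₗ[ℚ] L →ₗ[ℚ] L) (x : L) (n : ℕ) (z : L) :
    adp bk x (n + 1) z = adp bk x n (bk x z) :=
  Function.iterate_succ_apply _ n z

section

variable {deg : ℤ → Submodule ℚ L} {bk : L →ₗ[ℚ] L →ₗ[ℚ] L} {d : L →ₗ[ℚ] L}

theorem IsDGLA.bk_bk_self_apply_of_odd (h : IsDGLA deg bk d) {i : ℤ} (hi : Odd i) {x : L}
    (hx : x ∈ deg i) (t : L) : bk (bk x x) t = (2 : ℚ) • bk x (bk x t) := by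
  have hjac := h.jacobi i i x x t hx hx
  rw [(hi.mul hi).neg_one_zpow] at hjac
  linear_combination (norm := module) -hjac

variable (h : IsDGLA deg bk d) {a : L} (ha : IsMC deg bk d a)
include h ha

theorem IsMC.d_bk (t : L) : d (bk a t) = -bk a (bk a t) - bk a (d t) := by
  have hodd : Odd (-1 : ℤ) := by decide
  rw [h.leibniz (-1) a t ha.1, hodd.neg_one_zpow, ha.2, map_neg, map_smul, LinearMap.neg_apply,
    LinearMap.smul_apply, h.bk_bk_self_apply_of_odd hodd ha.1]
  module

theorem IsMC.theta_sq_apply (z : L) :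
    -bk a (-bk a z - d z) - d (-bk a z - d z) = 0 := by
  simp only [map_sub, map_neg, h.d_sq, ha.d_bk h]
  abel

theorem IsMC.d_bk_of_d_eq_neg_bk {t : L} (ht : d t = -bk a t) : d (bk a t) = 0 := by
  rw [ha.d_bk h, ht, map_neg]
  abel

theorem IsMC.d_bk_of_d_eq_zero {t : L} (ht : d t = 0) : d (bk a t) = -bk a (bk a t) := by
  rw [ha.d_bk h, ht, map_zero, sub_zero]

theorem IsMC.d_adp_of_d_eq_neg_bk {t : L} (ht : d t = -bk a t) (r : ℕ) :
    (Even r → d (adp bk a r t) = -adp bk a (r + 1) t) ∧ (Odd r → d (adp bk a r t) = 0) := by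
  induction r with
  | zero => exact ⟨fun _ => ht, fun h0 => absurd h0 Nat.not_odd_zero⟩
  | succ n ih =>
    refine ⟨fun he => ?_, fun ho => ?_⟩
    · rw [adp_succ, adp_succ, adp_succ]
      exact ha.d_bk_of_d_eq_zero h (ih.2 (Nat.not_even_iff_odd.mp (Nat.even_add_one.mp he)))
    · rw [adp_succ]
      have hn : Even n := Nat.not_odd_iff_even.mp (Nat.odd_add_one.mp ho)
      exact ha.d_bk_of_d_eq_neg_bk h ((ih.1 hn).trans (by rw [adp_succ]))

theorem IsMC.d_adp_of_d_eq_zero {t : L} (ht : d t = 0) (r : ℕ) :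
    (Even r → d (adp bk a r t) = 0) ∧ (Odd r → d (adp bk a r t) = -adp bk a (r + 1) t) := by
  cases r with
  | zero => exact ⟨fun _ => ht, fun h0 => absurd h0 Nat.not_odd_zero⟩
  | succ n =>
    have hshift := ha.d_adp_of_d_eq_neg_bk h (ha.d_bk_of_d_eq_zero h ht) n
    rw [adp_succ' bk a n, adp_succ' bk a (n + 1)]
    exact ⟨fun he => hshift.2 (Nat.not_even_iff_odd.mp (Nat.even_add_one.mp he)),
      fun ho => hshift.1 (Nat.not_odd_iff_even.mp (Nat.odd_add_one.mp ho))⟩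

end

theorem theta_computation_general
    {L : Type*} [AddCommGroup L] [Module ℚ L]
    (deg : ℤ → Submodule ℚ L) (bk : L →ₗ[ℚ] L →ₗ[ℚ] L) (d : L →ₗ[ℚ] L)
    (h : IsDGLA deg bk d) (a : L) (ha : IsMC deg bk d a)
    (v w : L)
    (hdv : d v = -(bk a v)) (hdw : d w = 0) :
    (∀ r : ℕ, (Even r → d (adp bk a r v) = -(adp bk a (r + 1) v)) ∧
        (Odd r → d (adp bk a r v) = 0)) ∧
    (∀ r : ℕ, (Even r → d (adp bk a r w) = 0) ∧
        (Odd r → d (adp bk a r w) = -(adp bk a (r + 1) w))) ∧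
    (∀ r : ℕ, (Even r → -(bk a (adp bk a r v)) - d (adp bk a r v) = 0) ∧
        (Odd r → -(bk a (adp bk a r v)) - d (adp bk a r v) = -(adp bk a (r + 1) v))) ∧
    (∀ r : ℕ, (Even r → -(bk a (adp bk a r w)) - d (adp bk a r w) = -(adp bk a (r + 1) w)) ∧
        (Odd r → -(bk a (adp bk a r w)) - d (adp bk a r w) = 0)) ∧
    (∀ r : ℕ, ∀ z : L, (z = adp bk a r v ∨ z = adp bk a r w) →
        -(bk a (-(bk a z) - d z)) - d (-(bk a z) - d z) = 0) := by
  have dv := ha.d_adp_of_d_eq_neg_bk h hdv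
  have dw := ha.d_adp_of_d_eq_zero h hdw
  refine ⟨dv, dw, fun r => ⟨fun he => ?_, fun ho => ?_⟩, fun r => ⟨fun he => ?_, fun ho => ?_⟩,
    fun r z _ => ha.theta_sq_apply h z⟩
  · rw [(dv r).1 he, adp_succ, sub_neg_eq_add, neg_add_cancel]
  · rw [(dv r).2 ho, adp_succ, sub_zero]
  · rw [(dw r).1 he, adp_succ, sub_zero]
  · rw [(dw r).2 ho, adp_succ, sub_neg_eq_add, neg_add_cancel]

/-- Let `a` be a degree `-1` Maurer-Cartan element, `v` a homogeneous
element of degree `≥ 0` with (linear-level differential) `d₁ v = -[a,v]`, and `w` a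
homogeneous element of degree `≥ 0` with `d₁ w = 0`.  Writing `a^r ⊠ v = ad_a^r(v)`,
the differential satisfies `d₁(a^r ⊠ v) = -a^{r+1} ⊠ v` for `r` even and `0` for `r`
odd (and dually for `w`); consequently the derivation `θ = -ad_a - d₁` satisfies
`θ(a^r ⊠ v) = 0` for `r` even and `-a^{r+1} ⊠ v` for `r` odd (dually for `w`),
and `θ² = 0` on these elements. -/
theorem theta_computation
    {L : Type*} [AddCommGroup L] [Module ℚ L]
    (deg : ℤ → Submodule ℚ L) (bk : L →ₗ[ℚ] L →ₗ[ℚ] L) (d : L →ₗ[ℚ] L)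
    (h : IsDGLA deg bk d) (a : L) (ha : IsMC deg bk d a)
    (v w : L) (nv nw : ℤ) (hnv : 0 ≤ nv) (hnw : 0 ≤ nw)
    (hv : v ∈ deg nv) (hw : w ∈ deg nw)
    (hdv : d v = -(bk a v)) (hdw : d w = 0) :
    (∀ r : ℕ, (Even r → d (adp bk a r v) = -(adp bk a (r + 1) v)) ∧
        (Odd r → d (adp bk a r v) = 0)) ∧
    (∀ r : ℕ, (Even r → d (adp bk a r w) = 0) ∧
        (Odd r → d (adp bk a r w) = -(adp bk a (r + 1) w))) ∧
    (∀ r : ℕ, (Even r → -(bk a (adp bk a r v)) - d (adp bk a r v) = 0) ∧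
        (Odd r → -(bk a (adp bk a r v)) - d (adp bk a r v) = -(adp bk a (r + 1) v))) ∧
    (∀ r : ℕ, (Even r → -(bk a (adp bk a r w)) - d (adp bk a r w) = -(adp bk a (r + 1) w)) ∧
        (Odd r → -(bk a (adp bk a r w)) - d (adp bk a r w) = 0)) ∧
    (∀ r : ℕ, ∀ z : L, (z = adp bk a r v ∨ z = adp bk a r w) →
        -(bk a (-(bk a z) - d z)) - d (-(bk a z) - d z) = 0) :=
  theta_computation_general deg bk d h a ha v w hdv hdw

end Paper
end
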